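/- Let P be a transition probability function on a separable metric space X and μ an invariant probability measure. Then μ is ergodic (an extreme point of the convex set of P-invariant probability measures) if and only if every μ-invariant Borel set A (meaning P(·,A) = 1_A μ-a.e.) satisfies μ(A) ∈ {0,1}. -/

import Mathlib

/-!
If `A` is `μ`-invariant with `0 < μ A < 1`, the normalized restrictions of `μ` to `A` and `Aᶜ`
are distinct invariant probability measures of which `μ` is a proper convex combination.

Conversely, if `μ = t μ₁ + (1 - t) μ₂`, then `μ₁ ≪ μ`; let `h = dμ₁/dμ`. For every invariant
measure the mass `P` carries from `Aᶜ` into `A` equals the mass it carries from `A` out to `Aᶜ`.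
Writing this balance for `A = {h < c}` under both `μ` and `μ₁`, and using `h < c` on `A`,
`h ≥ c` on `Aᶜ`, shows that almost no mass leaves `A`, so `A` is `μ`-invariant. Hence
`μ {h < 1} ∈ {0, 1}`, which together with `∫ h dμ = 1` forces `h = 1` a.e., i.e. `μ₁ = μ`.
-/

open MeasureTheory Set ProbabilityTheory
open scoped ENNReal NNReal

section

variable {X : Type*} [MeasurableSpace X] {P : X → Measure X} {μ ν : Measure X} {A : Set X}

def IsInvariantSet (P : X → Measure X) (μ : Measure X) (A : Set X) : Prop :=
  ∀ᵐ x ∂μ, P x A = A.indicator (fun _ => (1 : ℝ≥0∞)) x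

def IsExtremeInvariant (P : X → Measure X) (μ : Measure X) : Prop :=
  ∀ (μ₁ μ₂ : Measure X) (t : ℝ≥0),
    IsProbabilityMeasure μ₁ → μ₁.bind P = μ₁ → IsProbabilityMeasure μ₂ → μ₂.bind P = μ₂ →
    0 < t → t < 1 →
    μ = (t : ℝ≥0∞) • μ₁ + ((1 - t : ℝ≥0) : ℝ≥0∞) • μ₂ → μ₁ = μ₂

lemma measure_smul_cond_add_measure_smul_cond_compl [IsFiniteMeasure μ]
    (hA : MeasurableSet A) (h₀ : μ A ≠ 0) (h₀' : μ Aᶜ ≠ 0) :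
    μ A • μ[|A] + μ Aᶜ • μ[|Aᶜ] = μ := by
  simp only [ProbabilityTheory.cond, smul_smul, ENNReal.mul_inv_cancel h₀ (measure_ne_top μ A),
    ENNReal.mul_inv_cancel h₀' (measure_ne_top μ Aᶜ), one_smul,
    Measure.restrict_add_restrict_compl hA]

section Markov

variable [∀ x, IsProbabilityMeasure (P x)]

lemma IsInvariantSet.compl (hA : MeasurableSet A) (h : IsInvariantSet P μ A) :
    IsInvariantSet P μ Aᶜ := by
  filter_upwards [h] with x hx
  rw [prob_compl_eq_one_sub hA, hx]
  by_cases hxA : x ∈ A <;> simp [hxA]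

lemma setLIntegral_compl_apply_eq_setLIntegral_apply_compl (hP : Measurable P)
    [IsFiniteMeasure μ] (hμ : μ.bind P = μ) (hA : MeasurableSet A) :
    ∫⁻ x in Aᶜ, P x A ∂μ = ∫⁻ x in A, P x Aᶜ ∂μ := by
  have hPA : Measurable fun x => P x A := (Measure.measurable_coe hA).comp hP
  have hμA : ∫⁻ x in A, P x A ∂μ + ∫⁻ x in Aᶜ, P x A ∂μ = μ A := by
    rw [lintegral_add_compl _ hA, ← Measure.bind_apply hA hP.aemeasurable, hμ]
  have hfin : ∫⁻ x in A, P x A ∂μ ≠ ∞ :=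
    ne_top_of_le_ne_top (measure_ne_top μ A) (hμA ▸ le_self_add)
  refine (ENNReal.add_right_inj hfin).mp ?_
  calc ∫⁻ x in A, P x A ∂μ + ∫⁻ x in Aᶜ, P x A ∂μ
      _ = ∫⁻ x in A, (P x A + P x Aᶜ) ∂μ := by simp [hμA, prob_add_prob_compl hA]
      _ = ∫⁻ x in A, P x A ∂μ + ∫⁻ x in A, P x Aᶜ ∂μ := lintegral_add_left hPA _

lemma isInvariantSet_of_setLIntegral_apply_compl_eq_zero (hP : Measurable P)
    [IsFiniteMeasure μ] (hμ : μ.bind P = μ) (hA : MeasurableSet A)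
    (h : ∫⁻ x in A, P x Aᶜ ∂μ = 0) : IsInvariantSet P μ A := by
  have hout : ∀ᵐ x ∂μ.restrict A, P x Aᶜ = 0 :=
    (lintegral_eq_zero_iff ((Measure.measurable_coe hA.compl).comp hP)).mp h
  have hin : ∀ᵐ x ∂μ.restrict Aᶜ, P x A = 0 := by
    rw [← setLIntegral_compl_apply_eq_setLIntegral_apply_compl hP hμ hA] at h
    exact (lintegral_eq_zero_iff ((Measure.measurable_coe hA).comp hP)).mp h
  filter_upwards [(ae_restrict_iff' hA).mp hout, (ae_restrict_iff' hA.compl).mp hin]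
    with x hxA hxAc
  by_cases hx : x ∈ A
  · simpa [hx, prob_compl_eq_zero_iff hA] using hxA hx
  · simpa [hx] using hxAc hx

lemma IsInvariantSet.bind_restrict (hP : Measurable P) (hμ : μ.bind P = μ)
    (hA : MeasurableSet A) (h : IsInvariantSet P μ A) :
    (μ.restrict A).bind P = μ.restrict A := by
  ext B hB
  have hconc : ∀ᵐ x ∂μ, A.indicator (fun y => P y B) x = P x (B ∩ A) := by
    filter_upwards [h] with x hx
    by_cases hxA : x ∈ A
    · have : P x Aᶜ = 0 := by simpa [hxA, prob_compl_eq_zero_iff hA] using hx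
      rw [indicator_of_mem hxA, measure_inter_conull this]
    · have : P x A = 0 := by simpa [hxA] using hx
      rw [indicator_of_notMem hxA, measure_mono_null inter_subset_right this]
  rw [Measure.bind_apply hB hP.aemeasurable, Measure.restrict_apply hB, ← lintegral_indicator hA,
    lintegral_congr_ae hconc, ← Measure.bind_apply (hB.inter hA) hP.aemeasurable, hμ]

lemma IsInvariantSet.bind_cond (hP : Measurable P) (hμ : μ.bind P = μ)
    (hA : MeasurableSet A) (h : IsInvariantSet P μ A) : μ[|A].bind P = μ[|A] := by
  rw [ProbabilityTheory.cond, Measure.bind_smul, h.bind_restrict hP hμ hA]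

lemma isInvariantSet_setOf_rnDeriv_lt (hP : Measurable P) [IsFiniteMeasure μ]
    [IsFiniteMeasure ν] (hμ : μ.bind P = μ) (hν : ν.bind P = ν) (hνμ : ν ≪ μ) {c : ℝ≥0∞} :
    IsInvariantSet P μ {x | ν.rnDeriv μ x < c} := by
  set h := ν.rnDeriv μ
  set A := {x | h x < c}
  have hh : Measurable h := Measure.measurable_rnDeriv ν μ
  have hA : MeasurableSet A := hh measurableSet_Iio
  have hPA : Measurable fun x => P x A := (Measure.measurable_coe hA).comp hP
  have hPAc : Measurable fun x => P x Aᶜ := (Measure.measurable_coe hA.compl).comp hP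
  have hνh : ν = μ.withDensity h := (Measure.withDensity_rnDeriv_eq ν μ hνμ).symm
  refine isInvariantSet_of_setLIntegral_apply_compl_eq_zero hP hμ hA ?_
  have hle : ∀ᵐ x ∂μ.restrict A, h x * P x Aᶜ ≤ c * P x Aᶜ := by
    filter_upwards [ae_restrict_mem hA] with x hx
    exact mul_le_mul_left (le_of_lt hx) _
  have hge : ∫⁻ x in A, c * P x Aᶜ ∂μ ≤ ∫⁻ x in A, h x * P x Aᶜ ∂μ :=
    calc ∫⁻ x in A, c * P x Aᶜ ∂μ = c * ∫⁻ x in Aᶜ, P x A ∂μ := by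
          rw [lintegral_const_mul c hPAc,
            setLIntegral_compl_apply_eq_setLIntegral_apply_compl hP hμ hA]
      _ ≤ ∫⁻ x in Aᶜ, h x * P x A ∂μ := by
          rw [← lintegral_const_mul c hPA]
          exact setLIntegral_mono (hh.mul hPA) fun x hx =>
            mul_le_mul_left (not_lt.mp (show ¬ h x < c from hx)) _
      _ = ∫⁻ x in Aᶜ, P x A ∂ν := by
          rw [hνh, setLIntegral_withDensity_eq_setLIntegral_mul _ hh hPA hA.compl]; rfl
      _ = ∫⁻ x in A, P x Aᶜ ∂ν :=
          setLIntegral_compl_apply_eq_setLIntegral_apply_compl hP hν hA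
      _ = ∫⁻ x in A, h x * P x Aᶜ ∂μ := by
          rw [hνh, setLIntegral_withDensity_eq_setLIntegral_mul _ hh hPAc hA]; rfl
  have hfin : ∫⁻ x in A, h x * P x Aᶜ ∂μ ≠ ∞ :=
    ((lintegral_mono fun x => mul_le_of_le_one_right' prob_le_one).trans
      (setLIntegral_le_lintegral _ _) |>.trans_lt (Measure.lintegral_rnDeriv_lt_top ν μ)).ne
  have heq := ae_eq_of_ae_le_of_lintegral_le hle hfin (by fun_prop) hge
  refine (lintegral_eq_zero_iff hPAc).mpr ?_
  filter_upwards [heq, ae_restrict_mem hA] with x hx hxA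
  by_contra hne
  exact (ENNReal.mul_lt_mul_left hne (prob_le_one.trans_lt ENNReal.one_lt_top).ne hxA).ne hx

lemma eq_of_absolutelyContinuous_of_bind_eq (hP : Measurable P) [IsProbabilityMeasure μ]
    [IsProbabilityMeasure ν] (hμ : μ.bind P = μ) (hν : ν.bind P = ν) (hνμ : ν ≪ μ)
    (h01 : ∀ A, MeasurableSet A → IsInvariantSet P μ A → μ A = 0 ∨ μ A = 1) : ν = μ := by
  set h := ν.rnDeriv μ
  have hh : Measurable h := Measure.measurable_rnDeriv ν μ
  have hA : MeasurableSet {x | h x < 1} := hh measurableSet_Iio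
  have hint : ∫⁻ x, h x ∂μ = ∫⁻ _, 1 ∂μ := by
    rw [Measure.lintegral_rnDeriv hνμ, lintegral_one, measure_univ, measure_univ]
  suffices h =ᵐ[μ] 1 by
    rw [← Measure.withDensity_rnDeriv_eq ν μ hνμ, withDensity_congr_ae this, withDensity_one]
  rcases h01 _ hA (isInvariantSet_setOf_rnDeriv_lt hP hμ hν hνμ) with h0 | h1
  · have hge : (1 : X → ℝ≥0∞) ≤ᵐ[μ] h := by
      simpa [Filter.EventuallyLE, ae_iff, not_le] using h0
    exact (ae_eq_of_ae_le_of_lintegral_le hge (by simp) hh.aemeasurable hint.le).symm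
  · have hle : h ≤ᵐ[μ] 1 := by
      rw [← prob_compl_eq_zero_iff hA] at h1
      filter_upwards [measure_eq_zero_iff_ae_notMem.mp h1] with x hx
      simpa using (not_not.mp hx).le
    exact ae_eq_of_ae_le_of_lintegral_le hle (by simp [hint]) aemeasurable_const hint.ge

lemma IsExtremeInvariant.measure_eq_zero_or_one (hP : Measurable P) [IsProbabilityMeasure μ]
    (hμ : μ.bind P = μ) (hext : IsExtremeInvariant P μ) (hA : MeasurableSet A) (h : IsInvariantSet P μ A) :
    μ A = 0 ∨ μ A = 1 := by
  by_contra! ⟨h₀, h₁⟩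
  have h₀' : μ Aᶜ ≠ 0 := by rwa [Ne, prob_compl_eq_zero_iff hA]
  set t := (μ A).toNNReal
  have ht : (t : ℝ≥0∞) = μ A := ENNReal.coe_toNNReal (measure_ne_top μ A)
  have ht' : ((1 - t : ℝ≥0) : ℝ≥0∞) = μ Aᶜ := by
    rw [ENNReal.coe_sub, ht, ENNReal.coe_one, prob_compl_eq_one_sub hA]
  have ht₁ : t < 1 := by exact_mod_cast ht ▸ lt_of_le_of_ne prob_le_one h₁
  have hcond := hext μ[|A] μ[|Aᶜ] t (cond_isProbabilityMeasure h₀) (h.bind_cond hP hμ hA)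
    (cond_isProbabilityMeasure h₀') ((h.compl hA).bind_cond hP hμ hA.compl)
    (ENNReal.toNNReal_pos h₀ (measure_ne_top μ A)) ht₁
    (by rw [ht, ht', measure_smul_cond_add_measure_smul_cond_compl hA h₀ h₀'])
  have := congrArg (fun ν : Measure X => ν A) hcond
  simp [cond_apply_self h₀ (measure_ne_top μ A), ProbabilityTheory.cond_apply hA.compl]
    at this

lemma isExtremeInvariant_of_forall_isInvariantSet (hP : Measurable P) [IsProbabilityMeasure μ]
    (hμ : μ.bind P = μ)
    (h01 : ∀ A, MeasurableSet A → IsInvariantSet P μ A → μ A = 0 ∨ μ A = 1) :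
    IsExtremeInvariant P μ := by
  intro μ₁ μ₂ t _ hμ₁ _ hμ₂ ht₀ ht₁ hμt
  have hμ₁μ : μ₁ ≪ μ :=
    hμt ▸ (Measure.absolutelyContinuous_smul (ENNReal.coe_ne_zero.mpr ht₀.ne')).add_right _
  have hμ₂μ : μ₂ ≪ μ := hμt ▸ (Measure.absolutelyContinuous_smul
    (ENNReal.coe_ne_zero.mpr (tsub_pos_of_lt ht₁).ne')).add_right' _
  rw [eq_of_absolutelyContinuous_of_bind_eq hP hμ hμ₁ hμ₁μ h01,
    eq_of_absolutelyContinuous_of_bind_eq hP hμ hμ₂ hμ₂μ h01]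

end Markov

end

theorem stmt3 {X : Type*} [MeasurableSpace X]
    (P : X → Measure X) (hPprob : ∀ x, IsProbabilityMeasure (P x)) (hPmeas : Measurable P)
    (μ : Measure X) [IsProbabilityMeasure μ] (hinv : μ.bind P = μ) :
    (∀ (μ₁ μ₂ : Measure X) (t : ℝ≥0), IsProbabilityMeasure μ₁ → μ₁.bind P = μ₁ →
        IsProbabilityMeasure μ₂ → μ₂.bind P = μ₂ → 0 < t → t < 1 →
        μ = (t : ℝ≥0∞) • μ₁ + ((1 - t : ℝ≥0) : ℝ≥0∞) • μ₂ → μ₁ = μ₂) ↔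
      (∀ A : Set X, MeasurableSet A →
        (∀ᵐ x ∂μ, P x A = A.indicator (fun _ => (1 : ℝ≥0∞)) x) → μ A = 0 ∨ μ A = 1) :=
  ⟨fun hext _ hA h => IsExtremeInvariant.measure_eq_zero_or_one hPmeas hinv hext hA h,
    isExtremeInvariant_of_forall_isInvariantSet hPmeas hinv⟩
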